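/- (Lipschitz continuity of the asymptotic variance σ²_{H₁*} in the kernel parameter.) For any ω, ω' ∈ Ω, |σ²_{H₁*}(ω) − σ²_{H₁*}(ω')| ≤ 144 ν L_k ‖ω − ω'‖. -/
import Mathlib


open MeasureTheory ProbabilityTheory Filter Finset

/-- `Hstar k (x,y) (x',y') = k(x,x') - k(x,y') - k(y,x')`. -/
noncomputable def Hstar {𝒳 : Type*} (k : 𝒳 → 𝒳 → ℝ) (u v : 𝒳 × 𝒳) : ℝ :=
  k u.1 v.1 - k u.1 v.2 - k u.2 v.1

/-- `σ²_{H₁*} = 4 (E[H*₁₂ H*₁₃] - (E[H*₁₂])²)`, expectations over i.i.d. pairs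
with common law `m`, written as iterated integrals. -/
noncomputable def sigmaSqPop {𝒳 : Type*} [MeasurableSpace 𝒳]
    (m : Measure (𝒳 × 𝒳)) (k : 𝒳 → 𝒳 → ℝ) : ℝ :=
  4 * ((∫ u, (∫ v, (∫ w, Hstar k u v * Hstar k u w ∂m) ∂m) ∂m)
    - (∫ u, (∫ v, Hstar k u v ∂m) ∂m) ^ 2)

lemma abs_int_le' {α : Type*} [MeasurableSpace α] (μ : Measure α) [IsProbabilityMeasure μ]
    {f : α → ℝ} {C : ℝ} (h : ∀ x, |f x| ≤ C) : |∫ x, f x ∂μ| ≤ C := by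
  have := norm_integral_le_of_norm_le_const (μ := μ) (f := f) (C := C)
    (ae_of_all _ (by simpa [Real.norm_eq_abs] using h))
  simpa [Real.norm_eq_abs] using this

lemma abs_int_sub_le' {α : Type*} [MeasurableSpace α] (μ : Measure α) [IsProbabilityMeasure μ]
    {f g : α → ℝ} (hf : Integrable f μ) (hg : Integrable g μ) {D : ℝ}
    (h : ∀ x, |f x - g x| ≤ D) : |(∫ x, f x ∂μ) - ∫ x, g x ∂μ| ≤ D := by
  rw [← integral_sub hf hg]
  exact abs_int_le' μ h

/-- Lipschitz continuity of the asymptotic variance `σ²_{H₁*}` in the kernel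
parameter: `|σ²_{H₁*}(ω) − σ²_{H₁*}(ω')| ≤ 144 ν L_k ‖ω − ω'‖`. -/
theorem sigmaSqPop_lipschitz_in_kernel {𝒳 W : Type*} [MeasurableSpace 𝒳]
    [NormedAddCommGroup W] [NormedSpace ℝ W]
    (P Q : Measure 𝒳) [IsProbabilityMeasure P] [IsProbabilityMeasure Q]
    (m : Measure (𝒳 × 𝒳)) [IsProbabilityMeasure m]
    (hmP : m.map Prod.fst = P) (hmQ : m.map Prod.snd = Q)
    (S : Set W) (K : W → 𝒳 → 𝒳 → ℝ) (ν Lk : ℝ)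
    (hmeas : ∀ w ∈ S, Measurable (Function.uncurry (K w)))
    (hsymm : ∀ w ∈ S, ∀ x x', K w x x' = K w x' x)
    (hbound : ∀ w ∈ S, ∀ x x', |K w x x'| ≤ ν)
    (hlip : ∀ w ∈ S, ∀ w' ∈ S, ∀ x x', |K w x x' - K w' x x'| ≤ Lk * ‖w - w'‖)
    (w w' : W) (hw : w ∈ S) (hw' : w' ∈ S) :
    |sigmaSqPop m (K w) - sigmaSqPop m (K w')| ≤ 144 * ν * Lk * ‖w - w'‖ := by
  -- nonemptiness and sign facts
  have hne : Nonempty 𝒳 := by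
    by_contra h
    rw [not_nonempty_iff] at h
    have h2 : (Set.univ : Set (𝒳 × 𝒳)) = ∅ := by
      simp [Set.eq_empty_iff_forall_notMem]
    have h3 := measure_univ (μ := m)
    rw [h2, measure_empty] at h3
    exact zero_ne_one h3
  obtain ⟨x0⟩ := hne
  have hν : 0 ≤ ν := le_trans (abs_nonneg _) (hbound w hw x0 x0)
  set ε : ℝ := Lk * ‖w - w'‖ with hεdef
  have hε : 0 ≤ ε := le_trans (abs_nonneg _) (hlip w hw w' hw' x0 x0)
  -- measurability of Hstar uncurried
  have mH : ∀ w0 ∈ S, Measurable (fun p : (𝒳 × 𝒳) × (𝒳 × 𝒳) => Hstar (K w0) p.1 p.2) := by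
    intro w0 hw0
    have h := hmeas w0 hw0
    have h1 : Measurable (fun p : (𝒳 × 𝒳) × (𝒳 × 𝒳) => K w0 p.1.1 p.2.1) :=
      h.comp (measurable_fst.fst.prodMk measurable_snd.fst)
    have h2 : Measurable (fun p : (𝒳 × 𝒳) × (𝒳 × 𝒳) => K w0 p.1.1 p.2.2) :=
      h.comp (measurable_fst.fst.prodMk measurable_snd.snd)
    have h3 : Measurable (fun p : (𝒳 × 𝒳) × (𝒳 × 𝒳) => K w0 p.1.2 p.2.1) :=
      h.comp (measurable_fst.snd.prodMk measurable_snd.fst)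
    exact (h1.sub h2).sub h3
  -- bounds on Hstar
  have hb : ∀ w0 ∈ S, ∀ u v : 𝒳 × 𝒳, |Hstar (K w0) u v| ≤ 3 * ν := by
    intro w0 hw0 u v
    have h1 := abs_le.mp (hbound w0 hw0 u.1 v.1)
    have h2 := abs_le.mp (hbound w0 hw0 u.1 v.2)
    have h3 := abs_le.mp (hbound w0 hw0 u.2 v.1)
    rw [Hstar, abs_le]
    constructor <;> linarith [h1.1, h1.2, h2.1, h2.2, h3.1, h3.2]
  have hd : ∀ u v : 𝒳 × 𝒳, |Hstar (K w) u v - Hstar (K w') u v| ≤ 3 * ε := by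
    intro u v
    have h1 := abs_le.mp (hlip w hw w' hw' u.1 v.1)
    have h2 := abs_le.mp (hlip w hw w' hw' u.1 v.2)
    have h3 := abs_le.mp (hlip w hw w' hw' u.2 v.1)
    rw [Hstar, Hstar, abs_le]
    constructor <;> linarith [h1.1, h1.2, h2.1, h2.2, h3.1, h3.2]
  -- pointwise product bound
  have hprod : ∀ u v x : 𝒳 × 𝒳,
      |Hstar (K w) u v * Hstar (K w) u x - Hstar (K w') u v * Hstar (K w') u x| ≤ 18 * ν * ε := by
    intro u v x
    have e : Hstar (K w) u v * Hstar (K w) u x - Hstar (K w') u v * Hstar (K w') u x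
        = Hstar (K w) u v * (Hstar (K w) u x - Hstar (K w') u x)
          + (Hstar (K w) u v - Hstar (K w') u v) * Hstar (K w') u x := by ring
    calc |Hstar (K w) u v * Hstar (K w) u x - Hstar (K w') u v * Hstar (K w') u x|
        ≤ |Hstar (K w) u v| * |Hstar (K w) u x - Hstar (K w') u x|
          + |Hstar (K w) u v - Hstar (K w') u v| * |Hstar (K w') u x| := by
          rw [e]
          exact (abs_add_le _ _).trans (by rw [abs_mul, abs_mul])
      _ ≤ (3 * ν) * (3 * ε) + (3 * ε) * (3 * ν) := by
          refine add_le_add (mul_le_mul (hb w hw u v) (hd u x) (abs_nonneg _) (by linarith))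
            (mul_le_mul (hd u v) (hb w' hw' u x) (abs_nonneg _) (by linarith))
      _ = 18 * ν * ε := by ring
  -- integrability machinery
  have smH : ∀ w0 ∈ S, StronglyMeasurable (fun p : (𝒳 × 𝒳) × (𝒳 × 𝒳) => Hstar (K w0) p.1 p.2) :=
    fun w0 hw0 => (mH w0 hw0).stronglyMeasurable
  -- inner single integrable
  have Iinner : ∀ w0 ∈ S, ∀ u : 𝒳 × 𝒳, Integrable (fun v => Hstar (K w0) u v) m := by
    intro w0 hw0 u
    refine (integrable_const (3 * ν)).mono' ?_ (ae_of_all _ (fun v => by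
      simpa [Real.norm_eq_abs] using hb w0 hw0 u v))
    exact ((mH w0 hw0).comp measurable_prodMk_left).aestronglyMeasurable
  -- G := u ↦ ∫ v, Hstar
  have smG : ∀ w0 ∈ S, StronglyMeasurable (fun u => ∫ v, Hstar (K w0) u v ∂m) :=
    fun w0 hw0 => (smH w0 hw0).integral_prod_right'
  have hGb : ∀ w0 ∈ S, ∀ u, |∫ v, Hstar (K w0) u v ∂m| ≤ 3 * ν :=
    fun w0 hw0 u => abs_int_le' m (hb w0 hw0 u)
  have IG : ∀ w0 ∈ S, Integrable (fun u => ∫ v, Hstar (K w0) u v ∂m) m := by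
    intro w0 hw0
    refine (integrable_const (3 * ν)).mono' (smG w0 hw0).aestronglyMeasurable
      (ae_of_all _ (fun u => by simpa [Real.norm_eq_abs] using hGb w0 hw0 u))
  -- product: innermost integrable in x
  have Iprod1 : ∀ w0 ∈ S, ∀ u v : 𝒳 × 𝒳,
      Integrable (fun x => Hstar (K w0) u v * Hstar (K w0) u x) m := by
    intro w0 hw0 u v
    exact (Iinner w0 hw0 u).const_mul _
  -- strongly measurable ((u,v) ↦ ∫ x, Hstar u v * Hstar u x)
  have smF1 : ∀ w0 ∈ S, StronglyMeasurable
      (fun p : (𝒳 × 𝒳) × (𝒳 × 𝒳) => ∫ x, Hstar (K w0) p.1 p.2 * Hstar (K w0) p.1 x ∂m) := by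
    intro w0 hw0
    have hq : StronglyMeasurable
        (fun q : ((𝒳 × 𝒳) × (𝒳 × 𝒳)) × (𝒳 × 𝒳) =>
          Hstar (K w0) q.1.1 q.1.2 * Hstar (K w0) q.1.1 q.2) := by
      have a1 : Measurable (fun q : ((𝒳 × 𝒳) × (𝒳 × 𝒳)) × (𝒳 × 𝒳) =>
          Hstar (K w0) q.1.1 q.1.2) :=
        (mH w0 hw0).comp (measurable_fst.fst.prodMk measurable_fst.snd)
      have a2 : Measurable (fun q : ((𝒳 × 𝒳) × (𝒳 × 𝒳)) × (𝒳 × 𝒳) =>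
          Hstar (K w0) q.1.1 q.2) :=
        (mH w0 hw0).comp (measurable_fst.fst.prodMk measurable_snd)
      exact (a1.mul a2).stronglyMeasurable
    exact hq.integral_prod_right'
  -- bound on inner product integral
  have hF1b : ∀ w0 ∈ S, ∀ u v : 𝒳 × 𝒳,
      |∫ x, Hstar (K w0) u v * Hstar (K w0) u x ∂m| ≤ 9 * ν ^ 2 := by
    intro w0 hw0 u v
    refine abs_int_le' m (fun x => ?_)
    rw [abs_mul]
    calc |Hstar (K w0) u v| * |Hstar (K w0) u x| ≤ (3 * ν) * (3 * ν) :=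
      mul_le_mul (hb w0 hw0 u v) (hb w0 hw0 u x) (abs_nonneg _) (by linarith)
    _ = 9 * ν ^ 2 := by ring
  have IF1 : ∀ w0 ∈ S, ∀ u : 𝒳 × 𝒳,
      Integrable (fun v => ∫ x, Hstar (K w0) u v * Hstar (K w0) u x ∂m) m := by
    intro w0 hw0 u
    refine (integrable_const (9 * ν ^ 2)).mono' ?_
      (ae_of_all _ (fun v => by simpa [Real.norm_eq_abs] using hF1b w0 hw0 u v))
    exact ((smF1 w0 hw0).comp_measurable measurable_prodMk_left).aestronglyMeasurable
  have IF : ∀ w0 ∈ S, Integrable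
      (fun u => ∫ v, (∫ x, Hstar (K w0) u v * Hstar (K w0) u x ∂m) ∂m) m := by
    intro w0 hw0
    refine (integrable_const (9 * ν ^ 2)).mono'
      ((smF1 w0 hw0).integral_prod_right').aestronglyMeasurable
      (ae_of_all _ (fun u => ?_))
    simp only [Real.norm_eq_abs]
    exact abs_int_le' m (fun v => hF1b w0 hw0 u v)
  -- key bound 1: triple integrals
  have key1 : |(∫ u, (∫ v, (∫ x, Hstar (K w) u v * Hstar (K w) u x ∂m) ∂m) ∂m)
      - (∫ u, (∫ v, (∫ x, Hstar (K w') u v * Hstar (K w') u x ∂m) ∂m) ∂m)| ≤ 18 * ν * ε := by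
    refine abs_int_sub_le' m (IF w hw) (IF w' hw') (fun u => ?_)
    refine abs_int_sub_le' m (IF1 w hw u) (IF1 w' hw' u) (fun v => ?_)
    exact abs_int_sub_le' m (Iprod1 w hw u v) (Iprod1 w' hw' u v) (fun x => hprod u v x)
  -- key bound 2: double integrals
  have key2 : |(∫ u, (∫ v, Hstar (K w) u v ∂m) ∂m)
      - (∫ u, (∫ v, Hstar (K w') u v ∂m) ∂m)| ≤ 3 * ε := by
    refine abs_int_sub_le' m (IG w hw) (IG w' hw') (fun u => ?_)
    exact abs_int_sub_le' m (Iinner w hw u) (Iinner w' hw' u) (fun v => hd u v)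
  have hG1 : |∫ u, (∫ v, Hstar (K w) u v ∂m) ∂m| ≤ 3 * ν := abs_int_le' m (hGb w hw)
  have hG2 : |∫ u, (∫ v, Hstar (K w') u v ∂m) ∂m| ≤ 3 * ν := abs_int_le' m (hGb w' hw')
  -- assemble
  set A := ∫ u, (∫ v, (∫ x, Hstar (K w) u v * Hstar (K w) u x ∂m) ∂m) ∂m
  set A' := ∫ u, (∫ v, (∫ x, Hstar (K w') u v * Hstar (K w') u x ∂m) ∂m) ∂m
  set B := ∫ u, (∫ v, Hstar (K w) u v ∂m) ∂m
  set B' := ∫ u, (∫ v, Hstar (K w') u v ∂m) ∂m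
  have hsq : |B ^ 2 - B' ^ 2| ≤ 18 * ν * ε := by
    have e : B ^ 2 - B' ^ 2 = (B + B') * (B - B') := by ring
    rw [e, abs_mul]
    calc |B + B'| * |B - B'| ≤ (6 * ν) * (3 * ε) := by
          refine mul_le_mul ?_ key2 (abs_nonneg _) (by linarith)
          calc |B + B'| ≤ |B| + |B'| := abs_add_le _ _
            _ ≤ 6 * ν := by linarith
      _ = 18 * ν * ε := by ring
  have e2 : sigmaSqPop m (K w) - sigmaSqPop m (K w')
      = 4 * ((A - A') - (B ^ 2 - B' ^ 2)) := by
    simp only [sigmaSqPop]; ring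
  rw [e2]
  have : |(A - A') - (B ^ 2 - B' ^ 2)| ≤ 36 * ν * ε :=
    (abs_sub _ _).trans (by linarith)
  calc |4 * ((A - A') - (B ^ 2 - B' ^ 2))| = 4 * |(A - A') - (B ^ 2 - B' ^ 2)| := by
        rw [abs_mul]; norm_num
    _ ≤ 4 * (36 * ν * ε) := by linarith
    _ = 144 * ν * Lk * ‖w - w'‖ := by rw [hεdef]; ring
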